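/- Let P be a probability distribution on ℝ with finite first moment, X, X' independent samples from P, and y ∈ ℝ. Then CRPS(P,y) = ∫_ℝ (F(z) − 1{y ≤ z})² dz = E|X − y| − ½·E|X − X'|, where F is the CDF of P. -/

import Mathlib

open MeasureTheory

noncomputable def uu (a z : ℝ) : ℝ := if a ≤ z then 1 else 0

lemma uu_eq_indicator (z : ℝ) : (fun a => uu a z) = Set.indicator (Set.Iic z) (fun _ => (1:ℝ)) := by
  ext a; simp [uu, Set.indicator_apply, Set.mem_Iic]

lemma sq_uu_eq (a b z : ℝ) :
    (uu a z - uu b z)^2 = Set.indicator (Set.Ico (min a b) (max a b)) (fun _ => (1:ℝ)) z := by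
  by_cases h1 : a ≤ z <;> by_cases h2 : b ≤ z
  · simp [uu, h1, h2, Set.indicator_apply, Set.mem_Ico, not_lt.2 (max_le h1 h2)]
  · have ha : min a b ≤ z := le_trans (min_le_left _ _) h1
    have hb : z < max a b := lt_of_lt_of_le (not_le.1 h2) (le_max_right _ _)
    simp [uu, h1, h2, Set.indicator_apply, Set.mem_Ico, ha, hb]
  · have ha : min a b ≤ z := le_trans (min_le_right _ _) h2
    have hb : z < max a b := lt_of_lt_of_le (not_le.1 h1) (le_max_left _ _)
    simp [uu, h1, h2, Set.indicator_apply, Set.mem_Ico, ha, hb]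
  · simp [uu, h1, h2, Set.indicator_apply, Set.mem_Ico, not_le.2 (lt_min (not_le.1 h1) (not_le.1 h2))]

lemma integrable_sq_uu (a b : ℝ) : Integrable (fun z => (uu a z - uu b z)^2) := by
  simp_rw [sq_uu_eq]
  exact (integrable_indicator_iff measurableSet_Ico).2
    (integrableOn_const measure_Ico_lt_top.ne)

lemma integral_sq_uu (a b : ℝ) : ∫ z, (uu a z - uu b z)^2 = |a - b| := by
  simp_rw [sq_uu_eq]
  rw [integral_indicator_const (1:ℝ) measurableSet_Ico]
  simp [Real.volume_Ico, ENNReal.toReal_ofReal (by simp [min_le_max] : (0:ℝ) ≤ max a b - min a b),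
    max_sub_min_eq_abs, abs_sub_comm]

lemma integrable_prod_uu (x x' y : ℝ) :
    Integrable (fun z => (uu x z - uu y z) * (uu x' z - uu y z)) := by
  have hpt : (fun z => (uu x z - uu y z) * (uu x' z - uu y z))
      = fun z => ((uu x z - uu y z)^2 + (uu x' z - uu y z)^2 - (uu x z - uu x' z)^2)/2 := by
    funext z; ring
  rw [hpt]
  exact (((integrable_sq_uu x y).add (integrable_sq_uu x' y)).sub (integrable_sq_uu x x')).div_const 2

lemma integral_mul_uu (x x' y : ℝ) :
    ∫ z, (uu x z - uu y z) * (uu x' z - uu y z) = (|x - y| + |x' - y| - |x - x'|)/2 := by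
  have hpt : ∀ z, (uu x z - uu y z) * (uu x' z - uu y z)
      = ((uu x z - uu y z)^2 + (uu x' z - uu y z)^2 - (uu x z - uu x' z)^2)/2 := by
    intro z; ring
  simp_rw [hpt]
  have hadd : Integrable (fun z => (uu x z - uu y z)^2 + (uu x' z - uu y z)^2) :=
    (integrable_sq_uu x y).add (integrable_sq_uu x' y)
  rw [integral_div, integral_sub hadd (integrable_sq_uu x x'),
    integral_add (integrable_sq_uu x y) (integrable_sq_uu x' y)]
  rw [integral_sq_uu, integral_sq_uu, integral_sq_uu]

lemma measurable_uu (y : ℝ) : Measurable (fun z => uu y z) := by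
  unfold uu
  exact Measurable.ite (measurableSet_le measurable_const measurable_id)
    measurable_const measurable_const

lemma measurable_uu2 (y : ℝ) : Measurable (fun q : (ℝ × ℝ) × ℝ =>
    (uu q.1.1 q.2 - uu y q.2) * (uu q.1.2 q.2 - uu y q.2)) := by
  have h1 : Measurable (fun q : (ℝ × ℝ) × ℝ => uu q.1.1 q.2) := by
    unfold uu
    exact Measurable.ite (measurableSet_le (measurable_fst.comp measurable_fst) measurable_snd)
      measurable_const measurable_const
  have h2 : Measurable (fun q : (ℝ × ℝ) × ℝ => uu q.1.2 q.2) := by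
    unfold uu
    exact Measurable.ite (measurableSet_le (measurable_snd.comp measurable_fst) measurable_snd)
      measurable_const measurable_const
  have h3 : Measurable (fun q : (ℝ × ℝ) × ℝ => uu y q.2) :=
    (measurable_uu y).comp measurable_snd
  exact ((h1.sub h3).mul (h2.sub h3))

lemma integrable_comp_fst {P : Measure ℝ} [IsProbabilityMeasure P] {g : ℝ → ℝ}
    (hg : Integrable g P) : Integrable (fun p : ℝ × ℝ => g p.1) (P.prod P) := by
  have hmap : Measure.map Prod.fst (P.prod P) = P := by simp
  rw [← hmap] at hg
  exact (integrable_map_measure hg.aestronglyMeasurable measurable_fst.aemeasurable).1 hg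

lemma integrable_comp_snd {P : Measure ℝ} [IsProbabilityMeasure P] {g : ℝ → ℝ}
    (hg : Integrable g P) : Integrable (fun p : ℝ × ℝ => g p.2) (P.prod P) := by
  have hmap : Measure.map Prod.snd (P.prod P) = P := by simp
  rw [← hmap] at hg
  exact (integrable_map_measure hg.aestronglyMeasurable measurable_snd.aemeasurable).1 hg

lemma abs_mul_le_sq (x x' y z : ℝ) :
    |(uu x z - uu y z) * (uu x' z - uu y z)| ≤ (uu x z - uu y z)^2 := by
  unfold uu
  by_cases h1 : x ≤ z <;> by_cases h2 : y ≤ z <;> by_cases h3 : x' ≤ z <;>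
    simp [*]

/-- The kernel (energy) representation of the CRPS: for a probability
distribution `P` on `ℝ` with finite first moment and CDF `F`,
`∫ (F z - 1{y ≤ z})² dz = E|X - y| - ½ E|X - X'|` with `X, X'` i.i.d. `~ P`. -/
theorem crps_kernel_representation
    (P : Measure ℝ) [IsProbabilityMeasure P]
    (hmoment : Integrable (fun x : ℝ => x) P) (y : ℝ) :
    (∫ z : ℝ, ((P (Set.Iic z)).toReal - (if y ≤ z then (1:ℝ) else 0))^2)
      = (∫ x, |x - y| ∂P) - (1/2) * ∫ x, (∫ x', |x - x'| ∂P) ∂P := by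
  have h1y : Integrable (fun x => |x - y|) P := (hmoment.sub (integrable_const y)).abs
  set PP := P.prod P with hPP
  -- integrability of |p.1 - y| etc on PP
  have hA : Integrable (fun p : ℝ × ℝ => |p.1 - y|) PP := integrable_comp_fst h1y
  have hB : Integrable (fun p : ℝ × ℝ => |p.2 - y|) PP := integrable_comp_snd h1y
  have hC : Integrable (fun p : ℝ × ℝ => |p.1 - p.2|) PP := by
    refine (hA.add hB).mono
      ((measurable_fst.sub measurable_snd).abs).aestronglyMeasurable
      (Filter.Eventually.of_forall fun p => ?_)
    simp only [Pi.add_apply, Real.norm_eq_abs, abs_abs]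
    have h1 : |p.1 - p.2| ≤ |p.1 - y| + |p.2 - y| := by
      have := abs_sub_le p.1 y p.2
      rwa [abs_sub_comm y p.2] at this
    exact h1.trans (le_abs_self _)
  -- the kernel function
  set f : (ℝ × ℝ) → ℝ → ℝ := fun p z => (uu p.1 z - uu y z) * (uu p.2 z - uu y z) with hf
  have hmes : AEStronglyMeasurable (Function.uncurry f) (PP.prod volume) :=
    (measurable_uu2 y).aestronglyMeasurable
  -- Fubini integrability
  have hint : Integrable (Function.uncurry f) (PP.prod volume) := by
    rw [integrable_prod_iff hmes]
    constructor
    · exact Filter.Eventually.of_forall fun p => integrable_prod_uu p.1 p.2 y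
    · refine hA.mono hmes.norm.integral_prod_right' (Filter.Eventually.of_forall fun p => ?_)
      have hle : ∫ z, |f p z| ≤ |p.1 - y| := by
        rw [← integral_sq_uu p.1 y]
        exact integral_mono (integrable_prod_uu p.1 p.2 y).abs (integrable_sq_uu p.1 y)
          (fun z => abs_mul_le_sq p.1 p.2 y z)
      have hnn : (0:ℝ) ≤ ∫ z, |f p z| := integral_nonneg fun z => abs_nonneg _
      simp only [Function.uncurry_apply_pair, Real.norm_eq_abs]
      rw [abs_of_nonneg hnn]
      exact le_trans hle (le_abs_self _)
  -- rewrite the integrand of the LHS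
  have hFz : ∀ z : ℝ, ((P (Set.Iic z)).toReal - (if y ≤ z then (1:ℝ) else 0))^2
      = ∫ p, f p z ∂PP := by
    intro z
    have hiu : Integrable (fun x => uu x z) P := by
      rw [uu_eq_indicator]
      exact (integrable_const (1:ℝ)).indicator measurableSet_Iic
    have hg : ∫ x, (uu x z - uu y z) ∂P = (P (Set.Iic z)).toReal - (if y ≤ z then (1:ℝ) else 0) := by
      rw [integral_sub hiu (integrable_const _), integral_const]
      have : ∫ x, uu x z ∂P = (P (Set.Iic z)).toReal := by
        rw [uu_eq_indicator, integral_indicator_const (1:ℝ) measurableSet_Iic]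
        simp
        rfl
      rw [this]
      simp [uu]
    rw [← hg, sq, hPP, ← integral_prod_mul (fun x => uu x z - uu y z) (fun x => uu x z - uu y z)]
  simp_rw [hFz]
  -- swap integrals
  have hswap := integral_integral_swap (f := f) (μ := PP) (ν := volume) hint
  rw [← hswap]
  -- compute inner integrals
  have hinner : ∀ p : ℝ × ℝ, ∫ z, f p z = (|p.1 - y| + |p.2 - y| - |p.1 - p.2|)/2 :=
    fun p => integral_mul_uu p.1 p.2 y
  simp_rw [hinner]
  -- linearity
  rw [integral_div]
  have haddI : Integrable (fun p : ℝ × ℝ => |p.1 - y| + |p.2 - y|) PP := hA.add hB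
  rw [integral_sub haddI hC, integral_add hA hB]
  -- convert product integrals to iterated ones
  have hAe : ∫ p, |p.1 - y| ∂PP = ∫ x, |x - y| ∂P := by
    rw [hPP, integral_prod _ hA]
    simp [integral_const]
  have hBe : ∫ p, |p.2 - y| ∂PP = ∫ x, |x - y| ∂P := by
    rw [hPP, integral_prod _ hB]
    simp [integral_const]
  have hCe : ∫ p, |p.1 - p.2| ∂PP = ∫ x, (∫ x', |x - x'| ∂P) ∂P := by
    rw [hPP, integral_prod _ hC]
  rw [hAe, hBe, hCe]
  ring
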